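/- For the multirelational diamond ⟨R⟩P = d(R · P), the characterization ⟨R⟩P = {(a,{a}) | ∃ B, (a,B) ∈ R ∧ ∀ b ∈ B, (b,{b}) ∈ P} holds for every multirelation R and every subidentity P ⊆ 1_σ. -/

import Mathlib

open Set

/-- Sequential composition of multirelations (Peleg). -/
def mseq {X : Type*} (R S : Set (X × Set X)) : Set (X × Set X) :=
  {p | ∃ B, (p.1, B) ∈ R ∧ ∃ f : X → Set X, (∀ b ∈ B, (b, f b) ∈ S) ∧ p.2 = ⋃ b ∈ B, f b}

/-- The unit of sequential composition. -/
def sunit (X : Type*) : Set (X × Set X) := {p | p.2 = {p.1}}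

/-- Parallel (concurrent) composition of multirelations. -/
def mpar {X : Type*} (R S : Set (X × Set X)) : Set (X × Set X) :=
  {p | ∃ A B, (p.1, A) ∈ R ∧ (p.1, B) ∈ S ∧ p.2 = A ∪ B}

/-- The unit of parallel composition. -/
def punit (X : Type*) : Set (X × Set X) := {p | p.2 = (∅ : Set X)}

/-- Domain of a multirelation. -/
def mdom {X : Type*} (R : Set (X × Set X)) : Set (X × Set X) :=
  {p | p.2 = {p.1} ∧ ∃ A, (p.1, A) ∈ R}

/-- Antidomain of a multirelation. -/
def mantidom {X : Type*} (R : Set (X × Set X)) : Set (X × Set X) :=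
  {p | p.2 = {p.1} ∧ ¬ ∃ A, (p.1, A) ∈ R}

/-- Diamond operator. -/
def mdia {X : Type*} (R P : Set (X × Set X)) : Set (X × Set X) := mdom (mseq R P)

theorem exists_mem_mseq_iff {X : Type*} (R S : Set (X × Set X)) (a : X) :
    (∃ A, (a, A) ∈ mseq R S) ↔ ∃ B, (a, B) ∈ R ∧ ∀ b ∈ B, ∃ C, (b, C) ∈ S := by
  constructor
  · rintro ⟨_, B, hB, f, hf, -⟩
    exact ⟨B, hB, fun b hb => ⟨f b, hf b hb⟩⟩
  · rintro ⟨B, hB, hS⟩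
    choose! f hf using hS
    exact ⟨_, B, hB, f, hf, rfl⟩

theorem exists_mem_iff_of_subset_sunit {X : Type*} {P : Set (X × Set X)} (hP : P ⊆ sunit X)
    (b : X) : (∃ C, (b, C) ∈ P) ↔ (b, ({b} : Set X)) ∈ P :=
  ⟨fun ⟨C, hC⟩ => (show C = {b} from hP hC) ▸ hC, fun h => ⟨_, h⟩⟩

theorem stmt18 {X : Type*} (R P : Set (X × Set X)) (hP : P ⊆ sunit X) :
    mdia R P = {p | p.2 = {p.1} ∧ ∃ B, (p.1, B) ∈ R ∧ ∀ b ∈ B, (b, ({b} : Set X)) ∈ P} := by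
  ext ⟨a, A⟩
  simp only [mdia, mdom, mem_ofPred_eq, exists_mem_mseq_iff, exists_mem_iff_of_subset_sunit hP]
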